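/- Let a bounded, monotonic, strictly decreasing routing metric with M finite, W nonempty and exactly one fixed point be assigned over a finite connected system S with root r, and let B ⊆ V∖{r} be a nonempty set of Byzantine vertices. Then every vertex v ∈ S_B^* satisfies min_{b∈B} d(v,b) ≤ max(0, |M(S)| − 2); i.e., S_B^* is contained in the ball of radius max(0,|M(S)|−2) around the Byzantine vertices. -/
import Mathlib


def MetBounded {M W : Type} [LinearOrder M] (met : M → W → M) : Prop :=
  ∀ m w, met m w ≤ m

def MetMonotonic {M W : Type} [LinearOrder M] (met : M → W → M) : Prop :=
  ∀ m m' w, m ≤ m' → met m w ≤ met m' w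

def MetStrictlyDecreasing {M W : Type} [LinearOrder M] (met : M → W → M) : Prop :=
  ∀ m : M, (∀ w, met m w < m) ∨ (∀ w, met m w = m)

def IsMetFixedPoint {M W : Type} (met : M → W → M) (m : M) : Prop :=
  ∀ w, met m w = m

/-- The metric value of a walk, computed from its start with initial value `m`. -/
def walkVal {M W V : Type} (met : M → W → M) (wf : V → V → W) {G : SimpleGraph V} :
    {u v : V} → G.Walk u v → M → M
  | _, _, SimpleGraph.Walk.nil, m => m
  | u, _, SimpleGraph.Walk.cons (v := x) _ q, m => walkVal met wf q (met m (wf u x))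

/-- `mu v p` is the maximum, over simple paths from `p` to `v`, of the path metric. -/
def IsMaxMetric {M W V : Type} [LinearOrder M] (met : M → W → M) (wf : V → V → W)
    (G : SimpleGraph V) (mr : M) (mu : V → V → M) : Prop :=
  ∀ v p : V,
    (∃ q : G.Walk p v, q.IsPath ∧ walkVal met wf q mr = mu v p) ∧
    (∀ q : G.Walk p v, q.IsPath → walkVal met wf q mr ≤ mu v p)

lemma walkVal_le' {M W V : Type} [LinearOrder M] {met : M → W → M}
    (hbound : MetBounded met) (wf : V → V → W) {G : SimpleGraph V} :
    ∀ {u v : V} (q : G.Walk u v) (m : M), walkVal met wf q m ≤ m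
  | _, _, SimpleGraph.Walk.nil, m => le_refl m
  | _, _, SimpleGraph.Walk.cons _ q, m =>
      le_trans (walkVal_le' hbound wf q _) (hbound m _)

lemma walkVal_concat' {M W V : Type} (met : M → W → M) (wf : V → V → W) {G : SimpleGraph V} :
    ∀ {a b c : V} (q : G.Walk a b) (h : G.Adj b c) (m : M),
      walkVal met wf (q.concat h) m = met (walkVal met wf q m) (wf b c)
  | _, _, _, SimpleGraph.Walk.nil, _, _ => rfl
  | _, _, _, SimpleGraph.Walk.cons _ q, h, m => walkVal_concat' met wf q h _

/-- For a bounded, monotonic, strictly decreasing metric with `M`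
finite, `W` nonempty and exactly one fixed point, assigned over a finite connected
system with root `r` and nonempty Byzantine set `B ⊆ V∖{r}`: every `v ∈ S_B^*`
satisfies `min_{b∈B} d(v,b) ≤ max(0, |M(S)| − 2)`. -/
theorem statement_12 {M W V : Type} [LinearOrder M] [Finite M] [Nonempty W] [Fintype V]
    (met : M → W → M) (mr : M) (hmr : ∀ m : M, m ≤ mr)
    (hbound : MetBounded met) (hmono : MetMonotonic met)
    (hsd : MetStrictlyDecreasing met)
    (hfp : ∃! m : M, IsMetFixedPoint met m)
    (G : SimpleGraph V) (hconn : G.Connected) (r : V)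
    (wf : V → V → W) (hwf : ∀ u v : V, wf u v = wf v u)
    (mu : V → V → M) (hmu : IsMaxMetric met wf G mr mu)
    (B : Finset V) (hrB : r ∉ B) (hBne : B.Nonempty) :
    ∀ v : V, v ∉ B → mu v r < B.sup' hBne (fun b => mu v b) →
      B.inf' hBne (fun b => G.dist v b)
        ≤ Nat.card {m : M | (∃ u : V, mu u r = m) ∨ ∃ u : V, ∃ b ∈ B, mu u b = m} - 2 := by
  classical
  have _ : Fintype M := Fintype.ofFinite M
  intro v hvB hlt
  obtain ⟨m0, hm0fp, hm0uniq⟩ := hfp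
  -- every metric value is at least the unique fixed point
  have hm0le : ∀ m : M, m0 ≤ m := by
    intro m
    obtain ⟨w0⟩ := (inferInstance : Nonempty W)
    set f : M → M := fun x => met x w0 with hf
    have hanti : Antitone fun n => f^[n] m := by
      apply antitone_nat_of_succ_le
      intro n
      rw [Function.iterate_succ_apply']
      exact hbound _ _
    obtain ⟨i, j, hne, hij⟩ := Finite.exists_ne_map_eq_of_infinite (fun n => f^[n] m)
    wlog hij' : i < j generalizing i j
    · exact this j i hne.symm hij.symm (by omega)
    have hfix : f (f^[i] m) = f^[i] m := by
      have h1 : f^[j] m ≤ f^[i+1] m := hanti (by omega)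
      have h2 : f^[i+1] m ≤ f^[i] m := hanti (by omega)
      have : f^[i+1] m = f^[i] m := le_antisymm h2 (hij ▸ h1)
      rwa [Function.iterate_succ_apply'] at this
    have hxfp : IsMetFixedPoint met (f^[i] m) := by
      rcases hsd (f^[i] m) with hdec | hfx
      · exact absurd hfix (ne_of_lt (hdec w0))
      · exact hfx
    have : f^[i] m = m0 := hm0uniq _ hxfp
    calc m0 = f^[i] m := this.symm
      _ ≤ f^[0] m := hanti (Nat.zero_le i)
      _ = m := rfl
  -- the finset of used metric values
  set P : M → Prop := fun m => (∃ u : V, mu u r = m) ∨ ∃ u : V, ∃ b ∈ B, mu u b = m with hP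
  set F : Finset M := Finset.univ.filter P with hF
  set K : M → ℕ := fun c => (F.filter (fun m => c < m)).card with hK
  have hKlt : ∀ c y : M, y ∈ F → c < y → K y < K c := by
    intro c y hyF hcy
    apply Finset.card_lt_card
    constructor
    · intro m hm
      simp only [Finset.mem_filter] at hm ⊢
      exact ⟨hm.1, lt_trans hcy hm.2⟩
    · intro hsub
      have : y ∈ F.filter (fun m => y < m) :=
        hsub (by simp only [Finset.mem_filter]; exact ⟨hyF, hcy⟩)
      simp only [Finset.mem_filter] at this
      exact lt_irrefl y this.2
  -- key claim
  have key : ∀ b ∈ B, ∀ n : ℕ, ∀ u : V, m0 < mu u b → K (mu u b) = n → G.dist u b ≤ n := by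
    intro b hb n
    induction n using Nat.strong_induction_on with
    | _ n ih =>
      intro u hgt hKn
      by_cases hub : b = u
      · subst hub; simp [SimpleGraph.dist_self]
      obtain ⟨q, hq, hqval⟩ := (hmu u b).1
      cases q with
      | nil => exact absurd rfl hub
      | cons h p =>
        obtain ⟨u', q', h', hcq⟩ := SimpleGraph.Walk.exists_cons_eq_concat h p
        rw [hcq] at hq hqval
        have hq' : q'.IsPath := by
          rw [SimpleGraph.Walk.concat_eq_append] at hq
          exact hq.of_append_left
        set m' : M := walkVal met wf q' mr with hm'
        have hval : met m' (wf u' u) = mu u b := by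
          rw [← hqval, walkVal_concat']
        have hm'gt : m0 < m' := by
          rcases lt_or_ge m0 m' with h1 | h1
          · exact h1
          · have : m' = m0 := le_antisymm h1 (hm0le m')
            rw [this, hm0fp] at hval
            exact absurd hval (ne_of_lt hgt)
        have hdec : mu u b < m' := by
          rcases hsd m' with hd | hfx
          · rw [← hval]; exact hd _
          · exact absurd (hm0uniq _ hfx) (ne_of_gt hm'gt)
        have hle : m' ≤ mu u' b := (hmu u' b).2 q' hq'
        have hlt2 : mu u b < mu u' b := lt_of_lt_of_le hdec hle
        have hF' : mu u' b ∈ F := by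
          simp only [hF, Finset.mem_filter, Finset.mem_univ, true_and, hP]
          exact Or.inr ⟨u', b, hb, rfl⟩
        have hKlt' : K (mu u' b) < n := hKn ▸ hKlt _ _ hF' hlt2
        have hd' : G.dist u' b ≤ K (mu u' b) :=
          ih _ hKlt' u' (lt_trans hgt hlt2) rfl
        have hadj : G.Adj u u' := h'.symm
        have hdist1 : G.dist u u' ≤ 1 := by
          have := SimpleGraph.dist_le (SimpleGraph.Walk.cons hadj SimpleGraph.Walk.nil)
          simpa using this
        have := hconn.dist_triangle (u := u) (v := u') (w := b)
        omega
  -- pick the byzantine vertex attaining the sup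
  obtain ⟨b, hb, hbeq⟩ := Finset.exists_mem_eq_sup' hBne (fun b => mu v b)
  rw [hbeq] at hlt
  set x : M := mu v b with hx
  have hm0x : m0 < x := lt_of_le_of_lt (hm0le _) hlt
  have hdvb : G.dist v b ≤ K x := key b hb (K x) v hm0x rfl
  -- |M(S)| ≥ K x + 2
  have hxF : x ∈ F := by
    simp only [hF, Finset.mem_filter, Finset.mem_univ, true_and, hP]
    exact Or.inr ⟨v, b, hb, rfl⟩
  have hrF : mu v r ∈ F := by
    simp only [hF, Finset.mem_filter, Finset.mem_univ, true_and, hP]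
    exact Or.inl ⟨v, rfl⟩
  have hcard : K x + 2 ≤ F.card := by
    have hsub : insert (mu v r) (insert x (F.filter (fun m => x < m))) ⊆ F := by
      intro m hm
      simp only [Finset.mem_insert, Finset.mem_filter] at hm
      rcases hm with rfl | rfl | hm
      · exact hrF
      · exact hxF
      · exact hm.1
    have h1 : x ∉ F.filter (fun m => x < m) := by
      simp only [Finset.mem_filter]
      exact fun h => lt_irrefl x h.2
    have h2 : mu v r ∉ insert x (F.filter (fun m => x < m)) := by
      simp only [Finset.mem_insert, Finset.mem_filter]
      push_neg
      exact ⟨ne_of_lt hlt, fun _ => le_of_lt hlt⟩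
    have := Finset.card_le_card hsub
    rw [Finset.card_insert_of_notMem h2, Finset.card_insert_of_notMem h1] at this
    have hKx : K x = (F.filter (fun m => x < m)).card := rfl
    omega
  -- rewrite Nat.card as F.card
  have hset : {m : M | (∃ u : V, mu u r = m) ∨ ∃ u : V, ∃ b ∈ B, mu u b = m} = (↑F : Set M) := by
    ext m
    simp only [hF, Set.mem_setOf_eq, Finset.coe_filter, Finset.mem_univ, true_and,
      Set.mem_setOf_eq, hP]
  rw [hset, Nat.card_coe_set_eq, Set.ncard_coe_finset]
  calc B.inf' hBne (fun b => G.dist v b) ≤ G.dist v b := Finset.inf'_le _ hb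
    _ ≤ K x := hdvb
    _ ≤ F.card - 2 := by omega
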